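/- Soundness of the AND composition rule for two services: let (s₁,Φ₁) : A₁ ⇒ B₁ and (s₂,Φ₂) : A₂ ⇒ B₂ be service definitions, Φ_a1, Φ_a2 operators mapping (in every model of the environment, uniformly over x∈N) realizers of x:A to realizers of x:A₁ and x:A₂ respectively, and Φ_b an operator mapping realizers of x:B₁⊓B₂ to realizers of x:B. Then Φ_s(α) := Φ_b(Φ₁(Φ_a1(α)), Φ₂(Φ_a2(α))) uniformly solves the specification s(x) :: A ⇒ B in every model of the environment. -/

import Mathlib

namespace ITSem

inductive Concept (NC NR : Type) : Type where
  | atom : NC → Concept NC NR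
  | neg : Concept NC NR → Concept NC NR
  | inter : Concept NC NR → Concept NC NR → Concept NC NR
  | union : Concept NC NR → Concept NC NR → Concept NC NR
  | ex : NR → Concept NC NR → Concept NC NR
  | all : NR → Concept NC NR → Concept NC NR

inductive Formula (N NC NR : Type) : Type where
  | bot : Formula N NC NR
  | role : N → N → NR → Formula N NC NR
  | conc : N → Concept NC NR → Formula N NC NR
  | subsum : NC → Concept NC NR → Formula N NC NR

structure Model (N NC NR : Type) where
  D : Type
  dNonempty : Nonempty D
  indiv : N → D
  cname : NC → Set D
  rel : NR → D → D → Prop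

def Model.interp {N NC NR : Type} (M : Model N NC NR) : Concept NC NR → Set M.D
  | .atom A => M.cname A
  | .neg C => (M.interp C)ᶜ
  | .inter C D => M.interp C ∩ M.interp D
  | .union C D => M.interp C ∪ M.interp D
  | .ex R C => {x | ∃ y, M.rel R x y ∧ y ∈ M.interp C}
  | .all R C => {x | ∀ y, M.rel R x y → y ∈ M.interp C}

def Model.valid {N NC NR : Type} (M : Model N NC NR) : Formula N NC NR → Prop
  | .bot => False
  | .role c d R => M.rel R (M.indiv c) (M.indiv d)
  | .conc c C => M.indiv c ∈ M.interp C
  | .subsum A C => M.cname A ⊆ M.interp C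

def ITc (N NC NR : Type) : Concept NC NR → Type
  | .atom _ => Unit
  | .neg _ => Unit
  | .inter C D => ITc N NC NR C × ITc N NC NR D
  | .union C D => ITc N NC NR C ⊕ ITc N NC NR D
  | .ex _ C => N × ITc N NC NR C
  | .all _ C => N → ITc N NC NR C

def ITf (N NC NR : Type) : Formula N NC NR → Type
  | .bot => Unit
  | .role _ _ _ => Unit
  | .conc _ C => ITc N NC NR C
  | .subsum _ C => N → ITc N NC NR C

def realc {N NC NR : Type} (M : Model N NC NR) :
    (C : Concept NC NR) → N → ITc N NC NR C → Prop
  | .atom A, c, _ => M.indiv c ∈ M.cname A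
  | .neg C, c, _ => M.indiv c ∈ M.interp (.neg C)
  | .inter C D, c, η => realc M C c η.1 ∧ realc M D c η.2
  | .union C D, c, η =>
      match η with
      | Sum.inl α => realc M C c α
      | Sum.inr β => realc M D c β
  | .ex R C, c, η => M.rel R (M.indiv c) (M.indiv η.1) ∧ realc M C η.1 η.2
  | .all R C, c, φ =>
      M.indiv c ∈ M.interp (.all R C) ∧
      ∀ d, M.rel R (M.indiv c) (M.indiv d) → realc M C d (φ d)

def real {N NC NR : Type} (M : Model N NC NR) :
    (K : Formula N NC NR) → ITf N NC NR K → Prop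
  | .bot, _ => False
  | .role c d R, _ => M.rel R (M.indiv c) (M.indiv d)
  | .conc c C, η => realc M C c η
  | .subsum A C, φ =>
      M.cname A ⊆ M.interp C ∧
      ∀ d, M.indiv d ∈ M.cname A → realc M C d (φ d)

def ITl (N NC NR : Type) : List (Formula N NC NR) → Type
  | [] => PUnit
  | K :: Γ => ITf N NC NR K × ITl N NC NR Γ

def reall {N NC NR : Type} (M : Model N NC NR) :
    (Γ : List (Formula N NC NR)) → ITl N NC NR Γ → Prop
  | [], _ => True
  | K :: Γ, η => real M K η.1 ∧ reall M Γ η.2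

def splitIT {N NC NR : Type} :
    (Γ₁ Γ₂ : List (Formula N NC NR)) → ITl N NC NR (Γ₁ ++ Γ₂) →
      ITl N NC NR Γ₁ × ITl N NC NR Γ₂
  | [], _, γ => (PUnit.unit, γ)
  | _ :: Γ₁, Γ₂, γ => ((γ.1, (splitIT Γ₁ Γ₂ γ.2).1), (splitIT Γ₁ Γ₂ γ.2).2)

structure Env (N NC NR : Type) (n : ℕ) where
  T : List (Formula N NC NR)
  η : ITl N NC NR T
  pre : Fin n → Concept NC NR
  post : Fin n → Concept NC NR
  impl : (i : Fin n) → ITc N NC NR (pre i) → ITc N NC NR (post i)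

def UniformlySolves {N NC NR : Type} (M : Model N NC NR) (P Q : Concept NC NR)
    (Φ : ITc N NC NR P → ITc N NC NR Q) : Prop :=
  ∀ (t : N) (α : ITc N NC NR P), realc M P t α → realc M Q t (Φ α)

def Env.IsModel {N NC NR : Type} {n : ℕ} (E : Env N NC NR n) (M : Model N NC NR) : Prop :=
  reall M E.T E.η ∧ ∀ i, UniformlySolves M (E.pre i) (E.post i) (E.impl i)

theorem UniformlySolves.comp {N NC NR : Type} {M : Model N NC NR} {P Q R : Concept NC NR}
    {f : ITc N NC NR P → ITc N NC NR Q} {g : ITc N NC NR Q → ITc N NC NR R}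
    (hf : UniformlySolves M P Q f) (hg : UniformlySolves M Q R g) :
    UniformlySolves M P R (g ∘ f) :=
  fun t α hα => hg t (f α) (hf t α hα)

theorem UniformlySolves.pair {N NC NR : Type} {M : Model N NC NR} {P Q₁ Q₂ : Concept NC NR}
    {f₁ : ITc N NC NR P → ITc N NC NR Q₁} {f₂ : ITc N NC NR P → ITc N NC NR Q₂}
    (h₁ : UniformlySolves M P Q₁ f₁) (h₂ : UniformlySolves M P Q₂ f₂) :
    UniformlySolves M P (.inter Q₁ Q₂) (fun α => (f₁ α, f₂ α)) :=
  fun t α hα => ⟨h₁ t α hα, h₂ t α hα⟩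

theorem and_rule_sound {N NC NR : Type} {n : ℕ} (E : Env N NC NR n)
    (A A₁ B₁ A₂ B₂ B : Concept NC NR)
    (Φ₁ : ITc N NC NR A₁ → ITc N NC NR B₁) (Φ₂ : ITc N NC NR A₂ → ITc N NC NR B₂)
    (Φa1 : ITc N NC NR A → ITc N NC NR A₁) (Φa2 : ITc N NC NR A → ITc N NC NR A₂)
    (Φb : ITc N NC NR (.inter B₁ B₂) → ITc N NC NR B)
    (h₁ : ∀ (M : Model N NC NR), E.IsModel M → UniformlySolves M A₁ B₁ Φ₁)
    (h₂ : ∀ (M : Model N NC NR), E.IsModel M → UniformlySolves M A₂ B₂ Φ₂)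
    (ha1 : ∀ (M : Model N NC NR), E.IsModel M →
      ∀ (x : N) α, realc M A x α → realc M A₁ x (Φa1 α))
    (ha2 : ∀ (M : Model N NC NR), E.IsModel M →
      ∀ (x : N) α, realc M A x α → realc M A₂ x (Φa2 α))
    (hb : ∀ (M : Model N NC NR), E.IsModel M →
      ∀ (x : N) (β : ITc N NC NR (.inter B₁ B₂)),
        realc M (.inter B₁ B₂) x β → realc M B x (Φb β)) :
    ∀ (M : Model N NC NR), E.IsModel M →
      UniformlySolves M A B (fun α => Φb (Φ₁ (Φa1 α), Φ₂ (Φa2 α))) := by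
  intro M hM
  have solves₁ := UniformlySolves.comp (ha1 M hM) (h₁ M hM)
  have solves₂ := UniformlySolves.comp (ha2 M hM) (h₂ M hM)
  exact (solves₁.pair solves₂).comp (hb M hM)

end ITSem
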